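/- For any fixed real number r0 > 0, the series I_4(m, r0) tends to 0 as the integer m tends to infinity, where I_4(m, r0) = ∑_{k=1}^∞ (−1)^k · (r0/2)^{2k} · ((2m+2)/(2m+2k+2)) · ∑_{k1+k2=k, k1,k2 ≥ 0} Γ(m+1)² / (k1! · k2! · Γ(m+k1+1) · Γ(m+k2+1)). -/

import Mathlib

open Real Filter Topology

/-- `I₄(m, r₀)` from the paper:
`∑_{k=1}^∞ (−1)^k (r₀/2)^{2k} ((2m+2)/(2m+2k+2)) ·
  ∑_{k₁+k₂=k} Γ(m+1)² / (k₁! k₂! Γ(m+k₁+1) Γ(m+k₂+1))`. -/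
noncomputable def I4 (m : ℕ) (r0 : ℝ) : ℝ :=
  ∑' k : ℕ,
    (-1 : ℝ) ^ (k + 1) * (r0 / 2) ^ (2 * (k + 1)) *
      ((2 * (m : ℝ) + 2) / (2 * (m : ℝ) + 2 * ((k : ℝ) + 1) + 2)) *
      ∑ p ∈ Finset.HasAntidiagonal.antidiagonal (k + 1),
        Real.Gamma ((m : ℝ) + 1) ^ 2 /
          ((Nat.factorial p.1 : ℝ) * (Nat.factorial p.2 : ℝ) *
            Real.Gamma ((m : ℝ) + (p.1 : ℝ) + 1) * Real.Gamma ((m : ℝ) + (p.2 : ℝ) + 1))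

/-!
Since `Γ(m+j+1) = (m+j)! ≥ m! (m+1)^j`, each of the `k+1 ≤ 2^k` summands of the inner sum is at
most `(m+1)^{-k}`, so the `k`-th term of `I₄(m, r₀)` is bounded by `x^k` with `x = r₀² / (2(m+1))`.
Hence `|I₄(m, r₀)| ≤ x / (1 - x)` as soon as `x < 1`, and `x → 0` as `m → ∞`.
-/

open scoped Nat
open Finset

theorem Nat.factorial_sq_mul_succ_pow_le (m a b : ℕ) :
    m ! ^ 2 * (m + 1) ^ (a + b) ≤ a ! * b ! * (m + a)! * (m + b)! :=
  calc m ! ^ 2 * (m + 1) ^ (a + b) = (m ! * (m + 1) ^ a) * (m ! * (m + 1) ^ b) := by ring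
    _ ≤ (m + a)! * (m + b)! :=
      Nat.mul_le_mul Nat.factorial_mul_pow_le_factorial Nat.factorial_mul_pow_le_factorial
    _ ≤ a ! * b ! * (m + a)! * (m + b)! := by
      rw [mul_assoc _ (m + a)!]
      exact Nat.le_mul_of_pos_left _ (by positivity)

theorem factorial_sq_div_le_inv_pow (m a b : ℕ) :
    (m ! : ℝ) ^ 2 / (a ! * b ! * (m + a)! * (m + b)!) ≤ ((m : ℝ) + 1)⁻¹ ^ (a + b) := by
  rw [inv_pow, div_le_iff₀ (by positivity), ← div_eq_inv_mul,
    le_div_iff₀ (by positivity)]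
  exact_mod_cast Nat.factorial_sq_mul_succ_pow_le m a b

theorem Real.Gamma_nat_add_nat_add_one (m n : ℕ) :
    Gamma ((m : ℝ) + n + 1) = (m + n)! := by
  rw [← Nat.cast_add, Gamma_nat_eq_factorial]

theorem sum_antidiagonal_gamma_le (m n : ℕ) :
    ∑ p ∈ antidiagonal n, Gamma ((m : ℝ) + 1) ^ 2 /
        ((p.1 ! : ℝ) * p.2 ! * Gamma ((m : ℝ) + p.1 + 1) * Gamma ((m : ℝ) + p.2 + 1))
      ≤ (2 / ((m : ℝ) + 1)) ^ n := by
  have hcard : ((n + 1 : ℕ) : ℝ) ≤ 2 ^ n := by exact_mod_cast Nat.lt_two_pow_self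
  calc _ ≤ ∑ _p ∈ antidiagonal n, ((m : ℝ) + 1)⁻¹ ^ n := by
        refine sum_le_sum fun p hp => ?_
        rw [← mem_antidiagonal.mp hp, Gamma_nat_eq_factorial, Gamma_nat_add_nat_add_one,
          Gamma_nat_add_nat_add_one]
        exact factorial_sq_div_le_inv_pow m p.1 p.2
    _ = ((n + 1 : ℕ) : ℝ) * ((m : ℝ) + 1)⁻¹ ^ n := by
        rw [sum_const, Nat.card_antidiagonal, nsmul_eq_mul]
    _ ≤ (2 / ((m : ℝ) + 1)) ^ n := by
        rw [div_eq_mul_inv, mul_pow]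
        gcongr

theorem norm_tsum_le_div_one_sub_of_norm_le_pow_succ {E : Type*} [SeminormedAddCommGroup E]
    {f : ℕ → E} {x : ℝ} (hx0 : 0 ≤ x) (hx1 : x < 1) (hf : ∀ k, ‖f k‖ ≤ x ^ (k + 1)) :
    ‖∑' k, f k‖ ≤ x / (1 - x) := by
  have hsum := (hasSum_geometric_of_lt_one hx0 hx1).mul_left x
  rw [← div_eq_mul_inv] at hsum
  simp only [← pow_succ'] at hsum
  exact tsum_of_norm_bounded hsum hf

theorem norm_I4_le (m : ℕ) (r0 : ℝ) (hx : r0 ^ 2 / (2 * ((m : ℝ) + 1)) < 1) :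
    ‖I4 m r0‖ ≤ r0 ^ 2 / (2 * ((m : ℝ) + 1)) / (1 - r0 ^ 2 / (2 * ((m : ℝ) + 1))) := by
  refine norm_tsum_le_div_one_sub_of_norm_le_pow_succ (by positivity) hx fun k => ?_
  have hratio : 0 ≤ (2 * (m : ℝ) + 2) / (2 * m + 2 * ((k : ℝ) + 1) + 2) := by positivity
  have hratio_le : (2 * (m : ℝ) + 2) / (2 * m + 2 * ((k : ℝ) + 1) + 2) ≤ 1 :=
    div_le_one_of_le₀ (by linarith [k.cast_nonneg (α := ℝ)]) (by positivity)
  rw [pow_mul, norm_mul, norm_mul, norm_mul, norm_pow, norm_neg, norm_one, one_pow, one_mul,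
    Real.norm_of_nonneg (by positivity), Real.norm_of_nonneg hratio,
    Real.norm_of_nonneg (sum_nonneg fun p _ => by positivity)]
  calc _ ≤ ((r0 / 2) ^ 2) ^ (k + 1) * 1 * (2 / ((m : ℝ) + 1)) ^ (k + 1) := by
        gcongr
        exact sum_antidiagonal_gamma_le m (k + 1)
    _ = (r0 ^ 2 / (2 * ((m : ℝ) + 1))) ^ (k + 1) := by
        rw [mul_one, ← mul_pow]
        congr 1
        field_simp

theorem I4_tendsto_zero_general (r0 : ℝ) :
    Tendsto (fun m : ℕ => I4 m r0) atTop (𝓝 0) := by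
  set x : ℕ → ℝ := fun m => r0 ^ 2 / (2 * ((m : ℝ) + 1))
  have hx : Tendsto x atTop (𝓝 0) := by
    have := tendsto_one_div_add_atTop_nhds_zero_nat.const_mul (r0 ^ 2 / 2)
    rw [mul_zero] at this
    exact this.congr fun m => by simp only [x]; field_simp
  have hbound : Tendsto (fun m => x m / (1 - x m)) atTop (𝓝 0) := by
    have hcont : ContinuousAt (fun y : ℝ => y / (1 - y)) 0 :=
      continuousAt_id.div (continuousAt_const.sub continuousAt_id) (by norm_num)
    simpa only [Function.comp_def, sub_zero, div_one] using hcont.tendsto.comp hx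
  refine squeeze_zero_norm' ?_ hbound
  filter_upwards [hx.eventually (gt_mem_nhds one_pos)] with m hm
  exact norm_I4_le m r0 hm

theorem I4_tendsto_zero (r0 : ℝ) (hr0 : 0 < r0) :
    Tendsto (fun m : ℕ => I4 m r0) atTop (𝓝 0) :=
  I4_tendsto_zero_general r0
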